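/- The operators π_1, …, π_{m−1} on ℂ·IGLT_m(λ) satisfy the defining relations of the generators of the 0-Hecke algebra H_m(0): π_i ∘ π_i = π_i for all 1 ≤ i ≤ m−1, π_i ∘ π_{i+1} ∘ π_i = π_{i+1} ∘ π_i ∘ π_{i+1} for all 1 ≤ i ≤ m−2, and π_i ∘ π_j = π_j ∘ π_i whenever |i−j| ≥ 2; hence they define an H_m(0)-action on ℂ·IGLT_m(λ). -/
import Mathlib


open Classical

noncomputable section

namespace Genomic

/-- `lam` encodes a partition of `n`: `lam r` is the length of the `r`-th row (rows are
1-based, indexed from the top). -/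
def IsPartitionOf (n : ℕ) (lam : ℕ → ℕ) : Prop :=
  (∀ r, 1 ≤ r → lam (r + 1) ≤ lam r) ∧ (∀ r, n < r → lam r = 0) ∧
    (∑ r ∈ Finset.Icc 1 n, lam r) = n

/-- `p = (r, c)` is a box of the Young diagram of `lam` (row `r` from the top,
column `c` from the left, both 1-based). -/
def IsCell (lam : ℕ → ℕ) (p : ℕ × ℕ) : Prop :=
  1 ≤ p.1 ∧ 1 ≤ p.2 ∧ p.2 ≤ lam p.1

/-- `T` is an increasing gapless tableau of shape `lam` with maximum entry `m`
(normalized to take the value `0` outside the Young diagram). -/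
def IsIGLT (lam : ℕ → ℕ) (m : ℕ) (T : ℕ × ℕ → ℕ) : Prop :=
  (∀ p, ¬ IsCell lam p → T p = 0) ∧
  (∀ p, IsCell lam p → 1 ≤ T p ∧ T p ≤ m) ∧
  (∀ r c, IsCell lam (r, c) → IsCell lam (r, c + 1) → T (r, c) < T (r, c + 1)) ∧
  (∀ r c, IsCell lam (r, c) → IsCell lam (r + 1, c) → T (r, c) < T (r + 1, c)) ∧
  (∀ k, 1 ≤ k → k ≤ m → ∃ p, IsCell lam p ∧ T p = k)

/-- The set of boxes of `T` containing the entry `i`, i.e. `T⁻¹(i)`. -/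
def cellsWith (lam : ℕ → ℕ) (T : ℕ × ℕ → ℕ) (i : ℕ) : Set (ℕ × ℕ) :=
  {p | IsCell lam p ∧ T p = i}

def rowSet (lam : ℕ → ℕ) (T : ℕ × ℕ → ℕ) (i : ℕ) : Set ℕ :=
  {r | ∃ c, IsCell lam (r, c) ∧ T (r, c) = i}

/-- The row `r_t^{(i)}` of `Top_i(T)`. -/
def rtop (lam : ℕ → ℕ) (T : ℕ × ℕ → ℕ) (i : ℕ) : ℕ := sInf (rowSet lam T i)

/-- The row `r_b^{(i)}` of `Bot_i(T)`. -/
def rbot (lam : ℕ → ℕ) (T : ℕ × ℕ → ℕ) (i : ℕ) : ℕ := sSup (rowSet lam T i)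

/-- The column `c_t^{(i)}` of `Top_i(T)`. -/
def ctop (lam : ℕ → ℕ) (T : ℕ × ℕ → ℕ) (i : ℕ) : ℕ :=
  sInf {c | IsCell lam (rtop lam T i, c) ∧ T (rtop lam T i, c) = i}

/-- The column `c_b^{(i)}` of `Bot_i(T)`. -/
def cbot (lam : ℕ → ℕ) (T : ℕ × ℕ → ℕ) (i : ℕ) : ℕ :=
  sInf {c | IsCell lam (rbot lam T i, c) ∧ T (rbot lam T i, c) = i}

/-- `i` is a descent of `T`. -/
def IsDescent (lam : ℕ → ℕ) (T : ℕ × ℕ → ℕ) (i : ℕ) : Prop :=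
  rtop lam T i < rbot lam T (i + 1)

/-- `i` is an attacking descent of `T`. -/
def IsAttacking (lam : ℕ → ℕ) (T : ℕ × ℕ → ℕ) (i : ℕ) : Prop :=
  IsDescent lam T i ∧
    ((∃ r c, IsCell lam (r, c) ∧ IsCell lam (r + 1, c) ∧ T (r, c) = i ∧ T (r + 1, c) = i + 1) ∨
      (∃ p, IsCell lam p ∧ T p = i + 1 ∧ p.1 ≤ rbot lam T i))

/-- `s_i · T`: exchange the entries `i` and `i+1` of `T`. -/
def swapTab (lam : ℕ → ℕ) (i : ℕ) (T : ℕ × ℕ → ℕ) : ℕ × ℕ → ℕ := fun p =>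
  if IsCell lam p then (if T p = i then i + 1 else if T p = i + 1 then i else T p) else 0

/-- The `0`-Hecke operator `π_i` on the free `ℂ`-module on fillings of the diagram of `lam`. -/
def piOp (lam : ℕ → ℕ) (i : ℕ) :
    ((ℕ × ℕ → ℕ) →₀ ℂ) →ₗ[ℂ] ((ℕ × ℕ → ℕ) →₀ ℂ) :=
  Finsupp.lsum ℂ fun T => LinearMap.toSpanSingleton ℂ ((ℕ × ℕ → ℕ) →₀ ℂ)
    (if ¬ IsDescent lam T i then Finsupp.single T (1 : ℂ)
     else if IsAttacking lam T i then 0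
     else Finsupp.single (swapTab lam i T) (1 : ℂ))

/-- The basis vectors of `ℂ · IGLT_m(λ)` inside the ambient free module. -/
def iglSingles (lam : ℕ → ℕ) (m : ℕ) : Set ((ℕ × ℕ → ℕ) →₀ ℂ) :=
  {f | ∃ T, IsIGLT lam m T ∧ f = Finsupp.single T (1 : ℂ)}

/-! ### Lattice paths `Γ_i(T)` and the equivalence relation `∼` -/

/-- The (extended) entry of the box `p` is `< i`: boxes outside the positive quadrant count
as `-∞`, boxes in the positive quadrant but outside the diagram count as `+∞`. -/
def entryLt (lam : ℕ → ℕ) (T : ℕ × ℕ → ℕ) (i : ℕ) (p : ℕ × ℕ) : Prop :=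
  p.1 = 0 ∨ p.2 = 0 ∨ (IsCell lam p ∧ T p < i)

/-- The (extended) entry of the box `p` is `≥ i`. -/
def entryGe (lam : ℕ → ℕ) (T : ℕ × ℕ → ℕ) (i : ℕ) (p : ℕ × ℕ) : Prop :=
  IsCell lam p → i ≤ T p

/-- One step of the lattice path `Γ_i(T)`: from the lattice point `p = ⟨r,c⟩` either one
step up to `⟨r-1,c⟩` (the left box has entry `< i`, the right box entry `≥ i`) or one step
right to `⟨r,c+1⟩` (the above box has entry `< i`, the below box entry `≥ i`). -/
def gammaStep (lam : ℕ → ℕ) (T : ℕ × ℕ → ℕ) (i : ℕ) (p q : ℕ × ℕ) : Prop :=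
  (1 ≤ p.1 ∧ q = (p.1 - 1, p.2) ∧ entryLt lam T i (p.1, p.2) ∧
      entryGe lam T i (p.1, p.2 + 1)) ∨
  (q = (p.1, p.2 + 1) ∧ entryLt lam T i (p.1, p.2 + 1) ∧
      entryGe lam T i (p.1 + 1, p.2 + 1))

/-- `V` is (the vertex set of) the lattice path `Γ_i(T)`, running from the bottom-left
corner of `Bot_i(T)` to the top-right corner of `Top_i(T)`. -/
def IsGammaPath (lam : ℕ → ℕ) (T : ℕ × ℕ → ℕ) (i : ℕ) (V : Set (ℕ × ℕ)) : Prop :=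
  ∃ P : List (ℕ × ℕ), P ≠ [] ∧
    P.head? = some (rbot lam T i, cbot lam T i - 1) ∧
    P.getLast? = some (rtop lam T i - 1, ctop lam T i) ∧
    List.Chain' (gammaStep lam T i) P ∧ V = {p | p ∈ P}

/-- `i ∈ I(T)`: the entry `i` occupies more than one box of `T`. -/
def hasMultiple (lam : ℕ → ℕ) (T : ℕ × ℕ → ℕ) (i : ℕ) : Prop :=
  ∃ p q, p ≠ q ∧ p ∈ cellsWith lam T i ∧ q ∈ cellsWith lam T i

/-- The set of pairs `(Γ_i(T), T⁻¹(i))` for `i ∈ I(T)`. -/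
def gammaData (lam : ℕ → ℕ) (T : ℕ × ℕ → ℕ) : Set (Set (ℕ × ℕ) × Set (ℕ × ℕ)) :=
  {d | ∃ i, hasMultiple lam T i ∧ IsGammaPath lam T i d.1 ∧ d.2 = cellsWith lam T i}

/-- The equivalence relation `∼` on tableaux. -/
def TabEquiv (lam : ℕ → ℕ) (T₁ T₂ : ℕ × ℕ → ℕ) : Prop :=
  gammaData lam T₁ = gammaData lam T₂

/-! ### Source and sink tableaux -/

def IsSourceTab (lam : ℕ → ℕ) (m : ℕ) (T : ℕ × ℕ → ℕ) : Prop :=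
  IsIGLT lam m T ∧
    ¬ ∃ T' i, IsIGLT lam m T' ∧ T' ≠ T ∧ 1 ≤ i ∧ i ≤ m - 1 ∧
      piOp lam i (Finsupp.single T' (1 : ℂ)) = Finsupp.single T (1 : ℂ)

def IsSinkTab (lam : ℕ → ℕ) (m : ℕ) (T : ℕ × ℕ → ℕ) : Prop :=
  IsIGLT lam m T ∧
    ¬ ∃ T' i, IsIGLT lam m T' ∧ T' ≠ T ∧ 1 ≤ i ∧ i ≤ m - 1 ∧
      piOp lam i (Finsupp.single T (1 : ℂ)) = Finsupp.single T' (1 : ℂ)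

/-! ### Permutations, words, length and the left weak Bruhat order -/

def isWordIn (m : ℕ) (w : List ℕ) : Prop := ∀ j ∈ w, 1 ≤ j ∧ j ≤ m - 1

/-- The product `s_{i_p} ⋯ s_{i_2} s_{i_1}` of the simple transpositions indexed by the
word `w = [i_p, …, i_2, i_1]`. -/
def wordProd (w : List ℕ) : Equiv.Perm ℕ := (w.map fun j => Equiv.swap j (j + 1)).prod

/-- The Coxeter length of `σ` as an element of `S_m`. -/
def permLength (m : ℕ) (σ : Equiv.Perm ℕ) : ℕ :=
  sInf {k | ∃ w, isWordIn m w ∧ wordProd w = σ ∧ w.length = k}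

/-- `w` is a reduced word for `σ ∈ S_m`. -/
def IsReducedWord (m : ℕ) (w : List ℕ) (σ : Equiv.Perm ℕ) : Prop :=
  isWordIn m w ∧ wordProd w = σ ∧ w.length = permLength m σ

/-- `i ∈ Des_L(σ)`, i.e. `ℓ(s_i σ) < ℓ(σ)`. -/
def DesL (m : ℕ) (σ : Equiv.Perm ℕ) (i : ℕ) : Prop :=
  permLength m (Equiv.swap i (i + 1) * σ) < permLength m σ

/-- Covering relation of the left weak Bruhat order: `σ ⋖ s_i σ` for `i ∉ Des_L(σ)`. -/
def weakCovL (m : ℕ) (σ ρ : Equiv.Perm ℕ) : Prop :=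
  ∃ i, 1 ≤ i ∧ i ≤ m - 1 ∧ ¬ DesL m σ i ∧ ρ = Equiv.swap i (i + 1) * σ

/-- The left weak Bruhat order `⪯_L` on `S_m`. -/
def weakLe (m : ℕ) : Equiv.Perm ℕ → Equiv.Perm ℕ → Prop :=
  Relation.ReflTransGen (weakCovL m)

/-- The left weak Bruhat interval `[σ, ρ]_L`. -/
def weakInterval (m : ℕ) (σ ρ : Equiv.Perm ℕ) : Set (Equiv.Perm ℕ) :=
  {γ | weakLe m σ γ ∧ weakLe m γ ρ}

/-- `σ` is a permutation of `{1, …, m}`. -/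
def InSymm (m : ℕ) (σ : Equiv.Perm ℕ) : Prop := ∀ x, σ x ≠ x → 1 ≤ x ∧ x ≤ m

/-- `π_{i_p} ⋯ π_{i_2} π_{i_1} (x)` for the word `w = [i_p, …, i_2, i_1]`. -/
def applyWord (lam : ℕ → ℕ) (w : List ℕ) (x : (ℕ × ℕ → ℕ) →₀ ℂ) : (ℕ × ℕ → ℕ) →₀ ℂ :=
  w.foldr (fun j y => piOp lam j y) x

/-- The partial order `⪯_E`: `T₂ = π_σ (T₁)` for some `σ ∈ S_m`. -/
def precE (lam : ℕ → ℕ) (m : ℕ) (T₁ T₂ : ℕ × ℕ → ℕ) : Prop :=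
  ∃ σ w, IsReducedWord m w σ ∧
    applyWord lam w (Finsupp.single T₁ (1 : ℂ)) = Finsupp.single T₂ (1 : ℂ)

/-! ### Blocks `H_j`, reading words and `sfread` -/

/-- The set of descents of `TE` (inside `[1, m-1]`). -/
def descValsAll (lam : ℕ → ℕ) (m : ℕ) (TE : ℕ × ℕ → ℕ) : Set ℕ :=
  {d | 1 ≤ d ∧ d ≤ m - 1 ∧ IsDescent lam TE d}

/-- `k`, the number of descents of `TE`. -/
def numDesc (lam : ℕ → ℕ) (m : ℕ) (TE : ℕ × ℕ → ℕ) : ℕ := (descValsAll lam m TE).ncard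

/-- The index `j` such that `d_{j-1} < v ≤ d_j`. -/
def blockOf (lam : ℕ → ℕ) (m : ℕ) (TE : ℕ × ℕ → ℕ) (v : ℕ) : ℕ :=
  1 + {d | d ∈ descValsAll lam m TE ∧ d < v}.ncard

/-- The horizontal strip `H_j = TE⁻¹([d_{j-1}+1, d_j])`. -/
def Hset (lam : ℕ → ℕ) (m : ℕ) (TE : ℕ × ℕ → ℕ) (j : ℕ) : Set (ℕ × ℕ) :=
  {p | IsCell lam p ∧ blockOf lam m TE (TE p) = j}

/-- The `(b+1)`-st smallest element of a set of naturals. -/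
def nthInf (S : Set ℕ) : ℕ → ℕ
  | 0 => sInf S
  | b + 1 => nthInf {v | v ∈ S ∧ sInf S < v} b

/-- `d_j`, with `d_0 = 0` and `d_{k+1} = m`. -/
def dval (lam : ℕ → ℕ) (m : ℕ) (TE : ℕ × ℕ → ℕ) (j : ℕ) : ℕ :=
  if j = 0 then 0
  else if numDesc lam m TE < j then m
  else nthInf (descValsAll lam m TE) (j - 1)

/-- The word obtained by reading the entries of `T` on the boxes of `S` from right to
left (i.e. by decreasing column). -/
def stripWord (lam : ℕ → ℕ) (T : ℕ × ℕ → ℕ) (S : Set (ℕ × ℕ)) : List ℕ :=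
  (List.range (lam 1 + 1)).reverse.filterMap fun c =>
    if h : ∃ r, (r, c) ∈ S then some (T (sInf {r | (r, c) ∈ S}, c)) else none

/-- The standardized reading word of `T` (as a list): the concatenation over
`j = 1, …, k+1` of the de-duplicated right-to-left readings of `T` on `H_j`. -/
def sfreadList (lam : ℕ → ℕ) (m : ℕ) (TE T : ℕ × ℕ → ℕ) : List ℕ :=
  ((List.range (numDesc lam m TE + 1)).map fun j0 =>
    (stripWord lam T (Hset lam m TE (j0 + 1))).dedup).flatten

/-- `u` is the one-line notation of `σ ∈ S_m`. -/
def IsOneLineOf (m : ℕ) (u : List ℕ) (σ : Equiv.Perm ℕ) : Prop :=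
  InSymm m σ ∧ u.length = m ∧ ∀ j < m, σ (j + 1) = u.getD j 0

/-- The permutation of `S_m` whose one-line notation is `u` (junk value if none exists). -/
def toPerm (m : ℕ) (u : List ℕ) : Equiv.Perm ℕ :=
  if h : ∃ σ, IsOneLineOf m u σ then h.choose else 1

/-- The standardized reading word `sfread(T) ∈ S_m`. -/
def sfread (lam : ℕ → ℕ) (m : ℕ) (TE T : ℕ × ℕ → ℕ) : Equiv.Perm ℕ :=
  toPerm m (sfreadList lam m TE T)

/-! ### The generalized composition `α_E`, standard ribbon tableaux, and `η` -/

/-- The `j`-th and `(j+1)`-st columns of `rd(α_E)` are connected, i.e.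
`Bot_{d_{j-1}+1}(T_E)` is weakly left of `Top_{d_{j+1}}(T_E)`. -/
def connAt (lam : ℕ → ℕ) (m : ℕ) (TE : ℕ × ℕ → ℕ) (j : ℕ) : Prop :=
  cbot lam TE (dval lam m TE (j - 1) + 1) ≤ ctop lam TE (dval lam m TE (j + 1))

/-- The length `d_j - d_{j-1}` of the `j`-th column of `rd(α_E)`. -/
def colLen (lam : ℕ → ℕ) (m : ℕ) (TE : ℕ × ℕ → ℕ) (j : ℕ) : ℕ :=
  dval lam m TE j - dval lam m TE (j - 1)

/-- The row coordinate (in `ℤ`, increasing downwards) of the top box of the `j`-th column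
of the generalized ribbon diagram `rd(α_E)`. -/
def topRowZ (lam : ℕ → ℕ) (m : ℕ) (TE : ℕ × ℕ → ℕ) : ℕ → ℤ
  | 0 => 0
  | 1 => 0
  | j + 2 =>
      (if connAt lam m TE (j + 1) then topRowZ lam m TE (j + 1)
       else topRowZ lam m TE (j + 1) - 1) - ((colLen lam m TE (j + 2) : ℤ) - 1)

/-- The row coordinate of the `b`-th box from the top of the `j`-th column of `rd(α_E)`. -/
def rowOfBox (lam : ℕ → ℕ) (m : ℕ) (TE : ℕ × ℕ → ℕ) (j b : ℕ) : ℤ :=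
  topRowZ lam m TE j + (b : ℤ) - 1

/-- `(j, b)` is a box of `rd(α_E)`: column `j ∈ [1, k+1]`, box `b ∈ [1, d_j - d_{j-1}]`
from the top. -/
def inRangeBox (lam : ℕ → ℕ) (m : ℕ) (TE : ℕ × ℕ → ℕ) (j b : ℕ) : Prop :=
  1 ≤ j ∧ j ≤ numDesc lam m TE + 1 ∧ 1 ≤ b ∧ b ≤ colLen lam m TE j

/-- `F` is a standard ribbon tableau of shape `α_E` (encoded by column and position from
the top; normalized to `0` outside `rd(α_E)`). -/
def IsSRT (lam : ℕ → ℕ) (m : ℕ) (TE : ℕ × ℕ → ℕ) (F : ℕ → ℕ → ℕ) : Prop :=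
  (∀ j b, ¬ inRangeBox lam m TE j b → F j b = 0) ∧
  (∀ j b, inRangeBox lam m TE j b → 1 ≤ F j b ∧ F j b ≤ m) ∧
  (∀ v, 1 ≤ v → v ≤ m →
    ∃! q : ℕ × ℕ, inRangeBox lam m TE q.1 q.2 ∧ F q.1 q.2 = v) ∧
  (∀ j b, inRangeBox lam m TE j b → inRangeBox lam m TE j (b + 1) → F j b < F j (b + 1)) ∧
  (∀ j, 1 ≤ j → j ≤ numDesc lam m TE → connAt lam m TE j →
    F j 1 < F (j + 1) (colLen lam m TE (j + 1)))

/-- The position (1-based, from the left) of the box `p` within the strip `H_j` counted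
so that it increases by one along each connected component and repeats across breaks. -/
def idxIn (lam : ℕ → ℕ) (m : ℕ) (TE : ℕ × ℕ → ℕ) (j : ℕ) (p : ℕ × ℕ) : ℕ :=
  1 + {q | q ∈ Hset lam m TE j ∧ q.2 < p.2 ∧ (q.1, q.2 + 1) ∈ Hset lam m TE j}.ncard

/-- The filling `T_𝒯` of the Young diagram of `lam` associated to an SRT `F`. -/
def Tfill (lam : ℕ → ℕ) (m : ℕ) (TE : ℕ × ℕ → ℕ) (F : ℕ → ℕ → ℕ) : ℕ × ℕ → ℕ := fun p =>
  if IsCell lam p then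
    F (blockOf lam m TE (TE p)) (idxIn lam m TE (blockOf lam m TE (TE p)) p)
  else 0

/-- The linear map `η : ℂ·SRT(α_E) → ℂ·E`, `𝒯 ↦ T_𝒯` if `T_𝒯 ∈ E` and `𝒯 ↦ 0` otherwise. -/
def etaMap (lam : ℕ → ℕ) (m : ℕ) (TE : ℕ × ℕ → ℕ) :
    ((ℕ → ℕ → ℕ) →₀ ℂ) →ₗ[ℂ] ((ℕ × ℕ → ℕ) →₀ ℂ) :=
  Finsupp.lsum ℂ fun F => LinearMap.toSpanSingleton ℂ ((ℕ × ℕ → ℕ) →₀ ℂ)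
    (if IsSRT lam m TE F ∧ IsIGLT lam m (Tfill lam m TE F) ∧
        TabEquiv lam TE (Tfill lam m TE F)
     then Finsupp.single (Tfill lam m TE F) (1 : ℂ) else 0)

/-- The set of values of `T` on the strip `H_j`. -/
def valSet (lam : ℕ → ℕ) (m : ℕ) (TE T : ℕ × ℕ → ℕ) (j : ℕ) : Set ℕ :=
  {v | ∃ p ∈ Hset lam m TE j, T p = v}

/-- The standard ribbon tableau `𝒯_T` whose `j`-th column consists of the values of `T`
on `H_j`, increasing from top to bottom. -/
def canonSRT (lam : ℕ → ℕ) (m : ℕ) (TE T : ℕ × ℕ → ℕ) : ℕ → ℕ → ℕ := fun j b =>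
  if inRangeBox lam m TE j b then nthInf (valSet lam m TE T j) (b - 1) else 0

/-- `s_i · F`: exchange the entries `i` and `i+1` of a standard ribbon tableau. -/
def swapSRT (i : ℕ) (F : ℕ → ℕ → ℕ) : ℕ → ℕ → ℕ := fun j b =>
  if F j b = i then i + 1 else if F j b = i + 1 then i else F j b

/-- `i` appears strictly above `i+1` in `F`. -/
def aboveIn (lam : ℕ → ℕ) (m : ℕ) (TE : ℕ × ℕ → ℕ) (F : ℕ → ℕ → ℕ) (i : ℕ) : Prop :=
  ∃ j b j' b', inRangeBox lam m TE j b ∧ inRangeBox lam m TE j' b' ∧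
    F j b = i ∧ F j' b' = i + 1 ∧ rowOfBox lam m TE j b < rowOfBox lam m TE j' b'

/-- `i` and `i+1` lie in the same row of `F`. -/
def sameRowIn (lam : ℕ → ℕ) (m : ℕ) (TE : ℕ × ℕ → ℕ) (F : ℕ → ℕ → ℕ) (i : ℕ) : Prop :=
  ∃ j b j' b', inRangeBox lam m TE j b ∧ inRangeBox lam m TE j' b' ∧
    F j b = i ∧ F j' b' = i + 1 ∧ rowOfBox lam m TE j b = rowOfBox lam m TE j' b'

/-- The `0`-Hecke operator `π_i` on `ℂ·SRT(α_E)` (inside the ambient free module). -/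
def piSRT (lam : ℕ → ℕ) (m : ℕ) (TE : ℕ × ℕ → ℕ) (i : ℕ) :
    ((ℕ → ℕ → ℕ) →₀ ℂ) →ₗ[ℂ] ((ℕ → ℕ → ℕ) →₀ ℂ) :=
  Finsupp.lsum ℂ fun F => LinearMap.toSpanSingleton ℂ ((ℕ → ℕ → ℕ) →₀ ℂ)
    (if aboveIn lam m TE F i then Finsupp.single F (1 : ℂ)
     else if sameRowIn lam m TE F i then 0
     else Finsupp.single (swapSRT i F) (1 : ℂ))

/-! ### Weak Bruhat interval modules -/

/-- The `0`-Hecke operator `π_i` of the weak Bruhat interval module `B(σ, ρ)`. -/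
def piB (m : ℕ) (σ ρ : Equiv.Perm ℕ) (i : ℕ) :
    (Equiv.Perm ℕ →₀ ℂ) →ₗ[ℂ] (Equiv.Perm ℕ →₀ ℂ) :=
  Finsupp.lsum ℂ fun γ => LinearMap.toSpanSingleton ℂ (Equiv.Perm ℕ →₀ ℂ)
    (if DesL m γ i then Finsupp.single γ (1 : ℂ)
     else if Equiv.swap i (i + 1) * γ ∈ weakInterval m σ ρ then
       Finsupp.single (Equiv.swap i (i + 1) * γ) (1 : ℂ)
     else 0)

/-- The projection `pr : B(σ, ρ) → B(σ, ρ')`. -/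
def prMap (m : ℕ) (σ ρ' : Equiv.Perm ℕ) :
    (Equiv.Perm ℕ →₀ ℂ) →ₗ[ℂ] (Equiv.Perm ℕ →₀ ℂ) :=
  Finsupp.lsum ℂ fun γ => LinearMap.toSpanSingleton ℂ (Equiv.Perm ℕ →₀ ℂ)
    (if γ ∈ weakInterval m σ ρ' then Finsupp.single γ (1 : ℂ) else 0)

/-- The linear map `ℂ·E → B(sfread(T_E), sfread(T'_E))`, `T ↦ sfread(T)`. -/
def thetaMap (lam : ℕ → ℕ) (m : ℕ) (TE : ℕ × ℕ → ℕ) :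
    ((ℕ × ℕ → ℕ) →₀ ℂ) →ₗ[ℂ] (Equiv.Perm ℕ →₀ ℂ) :=
  Finsupp.lsum ℂ fun T => LinearMap.toSpanSingleton ℂ (Equiv.Perm ℕ →₀ ℂ)
    (if IsIGLT lam m T ∧ TabEquiv lam TE T then
      Finsupp.single (sfread lam m TE T) (1 : ℂ) else 0)

/-! ### `itread`, `w₀` of parabolic subgroups and `𝒯^⊙_{α_E}` -/

/-- `σ` lies in the subgroup generated by `{s_j : j ∈ S}`. -/
def genBy (S : Set ℕ) (σ : Equiv.Perm ℕ) : Prop :=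
  ∃ w : List ℕ, (∀ j ∈ w, j ∈ S) ∧ wordProd w = σ

/-- The longest element of the parabolic subgroup of `S_m` generated by `{s_j : j ∈ S}`. -/
def longestIn (m : ℕ) (S : Set ℕ) : Equiv.Perm ℕ :=
  if h : ∃ σ, genBy S σ ∧ ∀ τ, genBy S τ → permLength m τ ≤ permLength m σ then h.choose
  else 1

/-- `set((α_E)_⊙) = {d_j : 1 ≤ j ≤ k, columns j and j+1 connected}`. -/
def odotSet (lam : ℕ → ℕ) (m : ℕ) (TE : ℕ × ℕ → ℕ) : Set ℕ :=
  {d | ∃ j, 1 ≤ j ∧ j ≤ numDesc lam m TE ∧ connAt lam m TE j ∧ d = dval lam m TE j}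

/-- `set(((α_E)_⊙)^c) = [1, m-1] \ set((α_E)_⊙)`. -/
def odotComplSet (lam : ℕ → ℕ) (m : ℕ) (TE : ℕ × ℕ → ℕ) : Set ℕ :=
  {i | 1 ≤ i ∧ i ≤ m - 1 ∧ i ∉ odotSet lam m TE}

/-- The reading word `itread(F)` of an SRT of shape `α_E`: entries from left to right,
starting with the bottom row and proceeding upwards. -/
def itreadList (lam : ℕ → ℕ) (m : ℕ) (TE : ℕ × ℕ → ℕ) (F : ℕ → ℕ → ℕ) : List ℕ :=
  let k := numDesc lam m TE
  let rmax : ℤ := (colLen lam m TE 1 : ℤ) - 1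
  let rmin : ℤ := topRowZ lam m TE (k + 1)
  ((List.range (rmax - rmin + 1).toNat).map fun t =>
    (List.range (k + 1)).filterMap fun j0 =>
      let j := j0 + 1
      let b : ℤ := (rmax - t) - topRowZ lam m TE j + 1
      if 1 ≤ b ∧ b ≤ (colLen lam m TE j : ℤ) then some (F j b.toNat) else none).flatten

/-- The one-line notation of `σ ∈ S_m`. -/
def oneLineList (m : ℕ) (σ : Equiv.Perm ℕ) : List ℕ :=
  (List.range m).map fun t => σ (t + 1)

/-! ### Auxiliary machinery for Statement 3 -/

def valSwap (a v : ℕ) : ℕ := if v = a then a + 1 else if v = a + 1 then a else v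

lemma swapTab_cell {lam : ℕ → ℕ} {p : ℕ × ℕ} (h : IsCell lam p) (a : ℕ) (T : ℕ × ℕ → ℕ) :
    swapTab lam a T p = valSwap a (T p) := by
  simp only [swapTab, valSwap, if_pos h]

lemma rowSet_comp {lam : ℕ → ℕ} {U T : ℕ × ℕ → ℕ} {g : ℕ → ℕ}
    (hU : ∀ p, IsCell lam p → U p = g (T p)) {v u : ℕ}
    (hg : ∀ t, g t = v ↔ t = u) :
    rowSet lam U v = rowSet lam T u := by
  ext r
  constructor
  · rintro ⟨c, hc, hval⟩
    exact ⟨c, hc, (hg _).1 (by rw [← hU _ hc]; exact hval)⟩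
  · rintro ⟨c, hc, hval⟩
    exact ⟨c, hc, by rw [hU _ hc, hval]; exact (hg u).2 rfl⟩

lemma rtop_comp {lam : ℕ → ℕ} {U T : ℕ × ℕ → ℕ} {g : ℕ → ℕ}
    (hU : ∀ p, IsCell lam p → U p = g (T p)) {v u : ℕ}
    (hg : ∀ t, g t = v ↔ t = u) : rtop lam U v = rtop lam T u := by
  unfold rtop; rw [rowSet_comp hU hg]

lemma rbot_comp {lam : ℕ → ℕ} {U T : ℕ × ℕ → ℕ} {g : ℕ → ℕ}
    (hU : ∀ p, IsCell lam p → U p = g (T p)) {v u : ℕ}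
    (hg : ∀ t, g t = v ↔ t = u) : rbot lam U v = rbot lam T u := by
  unfold rbot; rw [rowSet_comp hU hg]

lemma isDescent_comp {lam : ℕ → ℕ} {U T : ℕ × ℕ → ℕ} {g : ℕ → ℕ}
    (hU : ∀ p, IsCell lam p → U p = g (T p)) {v u w : ℕ}
    (hg1 : ∀ t, g t = v ↔ t = u) (hg2 : ∀ t, g t = v + 1 ↔ t = w) :
    IsDescent lam U v ↔ rtop lam T u < rbot lam T w := by
  unfold IsDescent; rw [rtop_comp hU hg1, rbot_comp hU hg2]

lemma isAttacking_comp {lam : ℕ → ℕ} {U T : ℕ × ℕ → ℕ} {g : ℕ → ℕ}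
    (hU : ∀ p, IsCell lam p → U p = g (T p)) {v u w : ℕ}
    (hg1 : ∀ t, g t = v ↔ t = u) (hg2 : ∀ t, g t = v + 1 ↔ t = w) :
    IsAttacking lam U v ↔ (rtop lam T u < rbot lam T w ∧
      ((∃ r c, IsCell lam (r, c) ∧ IsCell lam (r + 1, c) ∧ T (r, c) = u ∧ T (r + 1, c) = w) ∨
       (∃ p, IsCell lam p ∧ T p = w ∧ p.1 ≤ rbot lam T u))) := by
  unfold IsAttacking
  refine and_congr (isDescent_comp hU hg1 hg2) (or_congr ?_ ?_)
  · constructor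
    · rintro ⟨r, c, h1, h2, e1, e2⟩
      exact ⟨r, c, h1, h2, (hg1 _).1 (by rw [← hU _ h1]; exact e1),
        (hg2 _).1 (by rw [← hU _ h2]; exact e2)⟩
    · rintro ⟨r, c, h1, h2, e1, e2⟩
      exact ⟨r, c, h1, h2, by rw [hU _ h1, e1]; exact (hg1 u).2 rfl,
        by rw [hU _ h2, e2]; exact (hg2 w).2 rfl⟩
  · constructor
    · rintro ⟨p, hp, e, hle⟩
      exact ⟨p, hp, (hg2 _).1 (by rw [← hU _ hp]; exact e),
        by rwa [← rbot_comp hU hg1]⟩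
    · rintro ⟨p, hp, e, hle⟩
      exact ⟨p, hp, by rw [hU _ hp, e]; exact (hg2 w).2 rfl,
        by rwa [rbot_comp hU hg1]⟩

lemma hU_id {lam : ℕ → ℕ} {T : ℕ × ℕ → ℕ} : ∀ p, IsCell lam p → T p = id (T p) :=
  fun _ _ => rfl

lemma hU_swap {lam : ℕ → ℕ} (a : ℕ) (T : ℕ × ℕ → ℕ) :
    ∀ p, IsCell lam p → swapTab lam a T p = valSwap a (T p) :=
  fun _ h => swapTab_cell h a T

lemma hU_swap2 {lam : ℕ → ℕ} (a b : ℕ) (T : ℕ × ℕ → ℕ) :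
    ∀ p, IsCell lam p → swapTab lam a (swapTab lam b T) p = (valSwap a ∘ valSwap b) (T p) :=
  fun p h => by rw [swapTab_cell h a, swapTab_cell h b]; rfl

lemma rowSet_bddAbove {n : ℕ} {lam : ℕ → ℕ} (hlam : IsPartitionOf n lam)
    (T : ℕ × ℕ → ℕ) (v : ℕ) : BddAbove (rowSet lam T v) := by
  refine ⟨n, fun r hr => ?_⟩
  rcases hr with ⟨c, ⟨hr1, hc1, hc2⟩, -⟩
  have hc2' : c ≤ lam r := hc2
  by_contra h
  have := hlam.2.1 r (by omega)
  omega

lemma rowSet_nonempty {lam : ℕ → ℕ} {m : ℕ} {T : ℕ × ℕ → ℕ} (hT : IsIGLT lam m T)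
    {v : ℕ} (hv1 : 1 ≤ v) (hv2 : v ≤ m) : (rowSet lam T v).Nonempty := by
  obtain ⟨⟨r, c⟩, hp, he⟩ := hT.2.2.2.2 v hv1 hv2
  exact ⟨r, c, hp, he⟩

lemma rtop_mem {lam : ℕ → ℕ} {T : ℕ × ℕ → ℕ} {v : ℕ} (h : (rowSet lam T v).Nonempty) :
    rtop lam T v ∈ rowSet lam T v := Nat.sInf_mem h

lemma le_rbot {n : ℕ} {lam : ℕ → ℕ} (hlam : IsPartitionOf n lam) {T : ℕ × ℕ → ℕ}
    {v r : ℕ} (hr : r ∈ rowSet lam T v) : r ≤ rbot lam T v :=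
  le_csSup (rowSet_bddAbove hlam T v) hr

lemma rtop_le_rbot {n : ℕ} {lam : ℕ → ℕ} {m : ℕ} {T : ℕ × ℕ → ℕ}
    (hlam : IsPartitionOf n lam) (hT : IsIGLT lam m T) {v : ℕ}
    (hv1 : 1 ≤ v) (hv2 : v ≤ m) : rtop lam T v ≤ rbot lam T v :=
  le_rbot hlam (rtop_mem (rowSet_nonempty hT hv1 hv2))

lemma nonempty_of_descent {lam : ℕ → ℕ} {T : ℕ × ℕ → ℕ} {u w : ℕ}
    (hd : rtop lam T u < rbot lam T w) : (rowSet lam T w).Nonempty := by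
  by_contra h
  rw [Set.not_nonempty_iff_eq_empty] at h
  unfold rbot at hd
  rw [h] at hd
  simp at hd

lemma rbot_lt_rtop_of_noex {lam : ℕ → ℕ} {T : ℕ × ℕ → ℕ} {u w : ℕ}
    (hne : (rowSet lam T w).Nonempty)
    (hnoex : ¬ ∃ p, IsCell lam p ∧ T p = w ∧ p.1 ≤ rbot lam T u) :
    rbot lam T u < rtop lam T w := by
  obtain ⟨c, hc, he⟩ := rtop_mem hne
  by_contra h
  exact hnoex ⟨(rtop lam T w, c), hc, he, by omega⟩

lemma piOp_single (lam : ℕ → ℕ) (i : ℕ) (T : ℕ × ℕ → ℕ) :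
    piOp lam i (Finsupp.single T (1 : ℂ)) =
      if ¬ IsDescent lam T i then Finsupp.single T (1 : ℂ)
      else if IsAttacking lam T i then 0
      else Finsupp.single (swapTab lam i T) (1 : ℂ) := by
  simp [piOp, Finsupp.lsum_single, LinearMap.toSpanSingleton_apply]
lemma piOp_single_nd {lam : ℕ → ℕ} {T : ℕ × ℕ → ℕ} {i : ℕ} (h : ¬ IsDescent lam T i) :
    piOp lam i (Finsupp.single T (1 : ℂ)) = Finsupp.single T (1 : ℂ) := by
  rw [piOp_single, if_pos h]

lemma piOp_single_att {lam : ℕ → ℕ} {T : ℕ × ℕ → ℕ} {i : ℕ} (h : IsAttacking lam T i) :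
    piOp lam i (Finsupp.single T (1 : ℂ)) = 0 := by
  rw [piOp_single, if_neg (not_not_intro h.1), if_pos h]

lemma piOp_single_free {lam : ℕ → ℕ} {T : ℕ × ℕ → ℕ} {i : ℕ}
    (hd : IsDescent lam T i) (ha : ¬ IsAttacking lam T i) :
    piOp lam i (Finsupp.single T (1 : ℂ)) = Finsupp.single (swapTab lam i T) (1 : ℂ) := by
  rw [piOp_single, if_neg (not_not_intro hd), if_neg ha]

lemma swapTab_comm {lam : ℕ → ℕ} {a b : ℕ} (h : a + 2 ≤ b) (T : ℕ × ℕ → ℕ) :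
    swapTab lam a (swapTab lam b T) = swapTab lam b (swapTab lam a T) := by
  funext p
  by_cases hc : IsCell lam p
  · rw [swapTab_cell hc, swapTab_cell hc, swapTab_cell hc, swapTab_cell hc]
    unfold valSwap; split_ifs <;> omega
  · simp only [swapTab, if_neg hc]

set_option maxHeartbeats 2000000 in
lemma swapTab_braid {lam : ℕ → ℕ} (i : ℕ) (T : ℕ × ℕ → ℕ) :
    swapTab lam i (swapTab lam (i + 1) (swapTab lam i T)) =
      swapTab lam (i + 1) (swapTab lam i (swapTab lam (i + 1) T)) := by
  funext p
  by_cases hc : IsCell lam p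
  · rw [swapTab_cell hc, swapTab_cell hc, swapTab_cell hc, swapTab_cell hc,
      swapTab_cell hc, swapTab_cell hc]
    unfold valSwap; split_ifs <;> omega
  · simp only [swapTab, if_neg hc]

lemma key_idem (lam : ℕ → ℕ) (i : ℕ) (T : ℕ × ℕ → ℕ) :
    piOp lam i (piOp lam i (Finsupp.single T (1 : ℂ))) =
      piOp lam i (Finsupp.single T (1 : ℂ)) := by
  by_cases hd : IsDescent lam T i
  · by_cases ha : IsAttacking lam T i
    · rw [piOp_single_att ha]; simp only [map_zero]
    · rw [piOp_single_free hd ha]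
      apply piOp_single_nd
      rw [isDescent_comp (hU_swap i T)
        (by intro t; unfold valSwap; split_ifs <;> omega : ∀ t, valSwap i t = i ↔ t = i + 1)
        (by intro t; unfold valSwap; split_ifs <;> omega : ∀ t, valSwap i t = i + 1 ↔ t = i)]
      intro hlt
      have hd' : rtop lam T i < rbot lam T (i + 1) := hd
      have hne : (rowSet lam T (i + 1)).Nonempty := nonempty_of_descent hd'
      have hnoex : ¬ ∃ p, IsCell lam p ∧ T p = i + 1 ∧ p.1 ≤ rbot lam T i :=
        fun hex => ha ⟨hd, Or.inr hex⟩
      have := rbot_lt_rtop_of_noex hne hnoex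
      omega
  · rw [piOp_single_nd hd]
    exact piOp_single_nd hd

lemma key_comm (lam : ℕ → ℕ) {i j : ℕ} (hij : i + 2 ≤ j) (T : ℕ × ℕ → ℕ) :
    piOp lam i (piOp lam j (Finsupp.single T (1 : ℂ))) =
      piOp lam j (piOp lam i (Finsupp.single T (1 : ℂ))) := by
  have hgi1 : ∀ t, valSwap j t = i ↔ t = i := by
    intro t; unfold valSwap; split_ifs <;> omega
  have hgi2 : ∀ t, valSwap j t = i + 1 ↔ t = i + 1 := by
    intro t; unfold valSwap; split_ifs <;> omega
  have hgj1 : ∀ t, valSwap i t = j ↔ t = j := by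
    intro t; unfold valSwap; split_ifs <;> omega
  have hgj2 : ∀ t, valSwap i t = j + 1 ↔ t = j + 1 := by
    intro t; unfold valSwap; split_ifs <;> omega
  have EdI : IsDescent lam (swapTab lam j T) i ↔ IsDescent lam T i :=
    (isDescent_comp (hU_swap j T) hgi1 hgi2).trans
      (isDescent_comp (hU_id (T := T)) (fun _ => Iff.rfl) (fun _ => Iff.rfl)).symm
  have EaI : IsAttacking lam (swapTab lam j T) i ↔ IsAttacking lam T i :=
    (isAttacking_comp (hU_swap j T) hgi1 hgi2).trans
      (isAttacking_comp (hU_id (T := T)) (fun _ => Iff.rfl) (fun _ => Iff.rfl)).symm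
  have EdJ : IsDescent lam (swapTab lam i T) j ↔ IsDescent lam T j :=
    (isDescent_comp (hU_swap i T) hgj1 hgj2).trans
      (isDescent_comp (hU_id (T := T)) (fun _ => Iff.rfl) (fun _ => Iff.rfl)).symm
  have EaJ : IsAttacking lam (swapTab lam i T) j ↔ IsAttacking lam T j :=
    (isAttacking_comp (hU_swap i T) hgj1 hgj2).trans
      (isAttacking_comp (hU_id (T := T)) (fun _ => Iff.rfl) (fun _ => Iff.rfl)).symm
  by_cases hdJ : IsDescent lam T j
  · by_cases haJ : IsAttacking lam T j
    · rw [piOp_single_att haJ, map_zero]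
      by_cases hdI : IsDescent lam T i
      · by_cases haI : IsAttacking lam T i
        · rw [piOp_single_att haI, map_zero]
        · rw [piOp_single_free hdI haI, piOp_single_att (EaJ.mpr haJ)]
      · rw [piOp_single_nd hdI, piOp_single_att haJ]
    · rw [piOp_single_free hdJ haJ]
      by_cases hdI : IsDescent lam T i
      · by_cases haI : IsAttacking lam T i
        · rw [piOp_single_att (EaI.mpr haI), piOp_single_att haI, map_zero]
        · rw [piOp_single_free (EdI.mpr hdI) (fun h => haI (EaI.mp h)),
            piOp_single_free hdI haI,
            piOp_single_free (EdJ.mpr hdJ) (fun h => haJ (EaJ.mp h)),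
            swapTab_comm hij]
      · rw [piOp_single_nd (fun h => hdI (EdI.mp h)), piOp_single_nd hdI,
          piOp_single_free hdJ haJ]
  · rw [piOp_single_nd hdJ]
    by_cases hdI : IsDescent lam T i
    · by_cases haI : IsAttacking lam T i
      · rw [piOp_single_att haI, map_zero]
      · rw [piOp_single_free hdI haI, piOp_single_nd (fun h => hdJ (EdJ.mp h))]
    · rw [piOp_single_nd hdI, piOp_single_nd hdJ]
lemma key_braid {n m : ℕ} {lam : ℕ → ℕ} (hlam : IsPartitionOf n lam)
    {T : ℕ × ℕ → ℕ} (hT : IsIGLT lam m T) {i : ℕ} (hi1 : 1 ≤ i) (hi2 : i + 2 ≤ m) :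
    piOp lam i (piOp lam (i + 1) (piOp lam i (Finsupp.single T (1 : ℂ)))) =
      piOp lam (i + 1) (piOp lam i (piOp lam (i + 1) (Finsupp.single T (1 : ℂ)))) := by
  -- basic row facts
  have ha12 : rtop lam T i ≤ rbot lam T i := rtop_le_rbot hlam hT hi1 (by omega)
  have hb12 : rtop lam T (i + 1) ≤ rbot lam T (i + 1) :=
    rtop_le_rbot hlam hT (by omega) (by omega)
  have hc12 : rtop lam T (i + 2) ≤ rbot lam T (i + 2) :=
    rtop_le_rbot hlam hT (by omega) (by omega)
  -- hg facts
  have g1a : ∀ t, valSwap i t = i ↔ t = i + 1 := by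
    intro t; unfold valSwap; split_ifs <;> omega
  have g1b : ∀ t, valSwap i t = i + 1 ↔ t = i := by
    intro t; unfold valSwap; split_ifs <;> omega
  have g1c : ∀ t, valSwap i t = i + 2 ↔ t = i + 2 := by
    intro t; unfold valSwap; split_ifs <;> omega
  have g2a : ∀ t, valSwap (i + 1) t = i ↔ t = i := by
    intro t; unfold valSwap; split_ifs <;> omega
  have g2b : ∀ t, valSwap (i + 1) t = i + 1 ↔ t = i + 2 := by
    intro t; unfold valSwap; split_ifs <;> omega
  have g2c : ∀ t, valSwap (i + 1) t = i + 2 ↔ t = i + 1 := by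
    intro t; unfold valSwap; split_ifs <;> omega
  have g21a : ∀ t, (valSwap (i + 1) ∘ valSwap i) t = i ↔ t = i + 1 := by
    intro t
    show valSwap (i + 1) (valSwap i t) = i ↔ t = i + 1
    unfold valSwap; split_ifs <;> omega
  have g21b : ∀ t, (valSwap (i + 1) ∘ valSwap i) t = i + 1 ↔ t = i + 2 := by
    intro t
    show valSwap (i + 1) (valSwap i t) = i + 1 ↔ t = i + 2
    unfold valSwap; split_ifs <;> omega
  have g12a : ∀ t, (valSwap i ∘ valSwap (i + 1)) t = i + 1 ↔ t = i := by
    intro t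
    show valSwap i (valSwap (i + 1) t) = i + 1 ↔ t = i
    unfold valSwap; split_ifs <;> omega
  have g12b : ∀ t, (valSwap i ∘ valSwap (i + 1)) t = i + 2 ↔ t = i + 1 := by
    intro t
    show valSwap i (valSwap (i + 1) t) = i + 2 ↔ t = i + 1
    unfold valSwap; split_ifs <;> omega
  -- status translations
  have E7 : IsDescent lam (swapTab lam i T) i ↔ rtop lam T (i + 1) < rbot lam T i :=
    isDescent_comp (hU_swap i T) g1a g1b
  have E9' : IsDescent lam (swapTab lam i T) (i + 1) ↔
      rtop lam T i < rbot lam T (i + 2) :=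
    isDescent_comp (hU_swap i T) g1b g1c
  have E9 : IsDescent lam (swapTab lam (i + 1) T) i ↔
      rtop lam T i < rbot lam T (i + 2) :=
    isDescent_comp (hU_swap (i + 1) T) g2a g2b
  have E8 : IsDescent lam (swapTab lam (i + 1) T) (i + 1) ↔
      rtop lam T (i + 2) < rbot lam T (i + 1) :=
    isDescent_comp (hU_swap (i + 1) T) g2b g2c
  have E1 : IsDescent lam (swapTab lam i T) (i + 1) ↔
      IsDescent lam (swapTab lam (i + 1) T) i := E9'.trans E9.symm
  have E2 : IsAttacking lam (swapTab lam i T) (i + 1) ↔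
      IsAttacking lam (swapTab lam (i + 1) T) i :=
    (isAttacking_comp (hU_swap i T) g1b g1c).trans
      (isAttacking_comp (hU_swap (i + 1) T) g2a g2b).symm
  have E3 : IsDescent lam (swapTab lam (i + 1) (swapTab lam i T)) i ↔
      IsDescent lam T (i + 1) :=
    (isDescent_comp (hU_swap2 (i + 1) i T) g21a g21b).trans
      (isDescent_comp (hU_id (T := T)) (fun _ => Iff.rfl) (fun _ => Iff.rfl)).symm
  have E4 : IsAttacking lam (swapTab lam (i + 1) (swapTab lam i T)) i ↔
      IsAttacking lam T (i + 1) :=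
    (isAttacking_comp (hU_swap2 (i + 1) i T) g21a g21b).trans
      (isAttacking_comp (hU_id (T := T)) (fun _ => Iff.rfl) (fun _ => Iff.rfl)).symm
  have E5 : IsDescent lam (swapTab lam i (swapTab lam (i + 1) T)) (i + 1) ↔
      IsDescent lam T i :=
    (isDescent_comp (hU_swap2 i (i + 1) T) g12a g12b).trans
      (isDescent_comp (hU_id (T := T)) (fun _ => Iff.rfl) (fun _ => Iff.rfl)).symm
  have E6 : IsAttacking lam (swapTab lam i (swapTab lam (i + 1) T)) (i + 1) ↔
      IsAttacking lam T i :=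
    (isAttacking_comp (hU_swap2 i (i + 1) T) g12a g12b).trans
      (isAttacking_comp (hU_id (T := T)) (fun _ => Iff.rfl) (fun _ => Iff.rfl)).symm
  by_cases hd1 : IsDescent lam T i
  · by_cases ha1 : IsAttacking lam T i
    · -- s1 = Attacking
      rw [piOp_single_att ha1]
      simp only [map_zero]
      by_cases hd2 : IsDescent lam T (i + 1)
      · by_cases ha2 : IsAttacking lam T (i + 1)
        · rw [piOp_single_att ha2]; simp only [map_zero]
        · -- s2 = S
          have hd2' : rtop lam T (i + 1) < rbot lam T (i + 2) := hd2
          have SBC : rbot lam T (i + 1) < rtop lam T (i + 2) :=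
            rbot_lt_rtop_of_noex (rowSet_nonempty hT (by omega) (by omega))
              (fun hex => ha2 ⟨hd2, Or.inr hex⟩)
          have hd1' : rtop lam T i < rbot lam T (i + 1) := hd1
          have dAC : rtop lam T i < rbot lam T (i + 2) := by omega
          rw [piOp_single_free hd2 ha2]
          by_cases haAC : IsAttacking lam (swapTab lam (i + 1) T) i
          · rw [piOp_single_att haAC]; simp only [map_zero]
          · rw [piOp_single_free (E9.mpr dAC) haAC, piOp_single_att (E6.mpr ha1)]
      · rw [piOp_single_nd hd2, piOp_single_att ha1]
        simp only [map_zero]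
    · -- s1 = S
      have hd1' : rtop lam T i < rbot lam T (i + 1) := hd1
      have SAB : rbot lam T i < rtop lam T (i + 1) :=
        rbot_lt_rtop_of_noex (rowSet_nonempty hT (by omega) (by omega))
          (fun hex => ha1 ⟨hd1, Or.inr hex⟩)
      rw [piOp_single_free hd1 ha1]
      by_cases hdAC : IsDescent lam (swapTab lam i T) (i + 1)
      · by_cases haAC : IsAttacking lam (swapTab lam i T) (i + 1)
        · -- σAC = Attacking
          rw [piOp_single_att haAC]
          simp only [map_zero]
          by_cases hd2 : IsDescent lam T (i + 1)
          · by_cases ha2 : IsAttacking lam T (i + 1)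
            · rw [piOp_single_att ha2]; simp only [map_zero]
            · rw [piOp_single_free hd2 ha2, piOp_single_att (E2.mp haAC)]
              simp only [map_zero]
          · rw [piOp_single_nd hd2, piOp_single_free hd1 ha1, piOp_single_att haAC]
        · -- σAC = S
          rw [piOp_single_free hdAC haAC]
          by_cases hd2 : IsDescent lam T (i + 1)
          · by_cases ha2 : IsAttacking lam T (i + 1)
            · rw [piOp_single_att (E4.mpr ha2), piOp_single_att ha2]
              simp only [map_zero]
            · rw [piOp_single_free (E3.mpr hd2) (fun h => ha2 (E4.mp h)),
                piOp_single_free hd2 ha2,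
                piOp_single_free (E1.mp hdAC) (fun h => haAC (E2.mpr h)),
                piOp_single_free (E5.mpr hd1) (fun h => ha1 (E6.mp h)),
                swapTab_braid]
          · rw [piOp_single_nd (fun h => hd2 (E3.mp h)), piOp_single_nd hd2,
              piOp_single_free hd1 ha1, piOp_single_free hdAC haAC]
      · -- σAC = N : LHS = single T1
        rw [piOp_single_nd hdAC, piOp_single_nd (by rw [E7]; omega)]
        have hnAC : ¬ rtop lam T i < rbot lam T (i + 2) := fun h => hdAC (E9'.mpr h)
        by_cases hd2 : IsDescent lam T (i + 1)
        · exfalso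
          have hd2' : rtop lam T (i + 1) < rbot lam T (i + 2) := hd2
          by_cases ha2 : IsAttacking lam T (i + 1)
          · omega
          · have SBC : rbot lam T (i + 1) < rtop lam T (i + 2) :=
              rbot_lt_rtop_of_noex (rowSet_nonempty hT (by omega) (by omega))
                (fun hex => ha2 ⟨hd2, Or.inr hex⟩)
            omega
        · rw [piOp_single_nd hd2, piOp_single_free hd1 ha1, piOp_single_nd hdAC]
  · -- s1 = N
    rw [piOp_single_nd hd1]
    by_cases hd2 : IsDescent lam T (i + 1)
    · by_cases ha2 : IsAttacking lam T (i + 1)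
      · rw [piOp_single_att ha2]; simp only [map_zero]
      · -- s2 = S
        have SBC : rbot lam T (i + 1) < rtop lam T (i + 2) :=
          rbot_lt_rtop_of_noex (rowSet_nonempty hT (by omega) (by omega))
            (fun hex => ha2 ⟨hd2, Or.inr hex⟩)
        rw [piOp_single_free hd2 ha2]
        by_cases hdAC : IsDescent lam (swapTab lam (i + 1) T) i
        · by_cases haAC : IsAttacking lam (swapTab lam (i + 1) T) i
          · rw [piOp_single_att haAC]; simp only [map_zero]
          · rw [piOp_single_free hdAC haAC,
              piOp_single_nd (fun h => hd1 (E5.mp h))]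
        · rw [piOp_single_nd hdAC, piOp_single_nd (by rw [E8]; omega)]
    · rw [piOp_single_nd hd2, piOp_single_nd hd1, piOp_single_nd hd2]
/-- The operators `π_1, …, π_{m-1}` on `ℂ·IGLT_m(λ)` satisfy the defining
relations of the generators of the 0-Hecke algebra `H_m(0)`; hence they define an
`H_m(0)`-action on `ℂ·IGLT_m(λ)`. -/
theorem piOp_hecke_relations (n m : ℕ) (hn : 0 < n) (hm : 0 < m) (hmn : m ≤ n)
    (lam : ℕ → ℕ) (hlam : IsPartitionOf n lam) :
    (∀ i, 1 ≤ i → i ≤ m - 1 → ∀ v ∈ Submodule.span ℂ (iglSingles lam m),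
      piOp lam i (piOp lam i v) = piOp lam i v) ∧
    (∀ i, 1 ≤ i → i ≤ m - 2 → ∀ v ∈ Submodule.span ℂ (iglSingles lam m),
      piOp lam i (piOp lam (i + 1) (piOp lam i v)) =
        piOp lam (i + 1) (piOp lam i (piOp lam (i + 1) v))) ∧
    (∀ i j, 1 ≤ i → i ≤ m - 1 → 1 ≤ j → j ≤ m - 1 → (i + 2 ≤ j ∨ j + 2 ≤ i) →
      ∀ v ∈ Submodule.span ℂ (iglSingles lam m),
        piOp lam i (piOp lam j v) = piOp lam j (piOp lam i v)) := by
  refine ⟨?_, ?_, ?_⟩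
  · intro i hi1 hi2 v hv
    induction hv using Submodule.span_induction with
    | mem x hx => obtain ⟨T, hT, rfl⟩ := hx; exact key_idem lam i T
    | zero => simp only [map_zero]
    | add x y hx hy ihx ihy => simp only [map_add, ihx, ihy]
    | smul a x hx ih => simp only [map_smul, ih]
  · intro i hi1 hi2 v hv
    have hi2' : i + 2 ≤ m := by omega
    induction hv using Submodule.span_induction with
    | mem x hx => obtain ⟨T, hT, rfl⟩ := hx; exact key_braid hlam hT hi1 hi2'
    | zero => simp only [map_zero]
    | add x y hx hy ihx ihy => simp only [map_add, ihx, ihy]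
    | smul a x hx ih => simp only [map_smul, ih]
  · intro i j hi1 hi2 hj1 hj2 hij v hv
    induction hv using Submodule.span_induction with
    | mem x hx =>
        obtain ⟨T, hT, rfl⟩ := hx
        rcases hij with h | h
        · exact key_comm lam h T
        · exact (key_comm lam h T).symm
    | zero => simp only [map_zero]
    | add x y hx hy ihx ihy => simp only [map_add, ihx, ihy]
    | smul a x hx ih => simp only [map_smul, ih]

end Genomic
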